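/- arXiv:2308.16038 — 2 statements merged into one kernel-verified Lean document; each statement's English description precedes it below -/
import Mathlib

section
/- Let f, g : {0,1}^n → ℝ with f ≥ 0, f not identically zero, τ > ρ, g ∗ f ≥ τ f pointwise, and ĝ(S) ≤ ρ for all |S| ≥ d. Then any code C ⊆ {0,1}^n with minimal distance ≥ d satisfies |C| ≤ ((ĝ(0) − ρ)/(τ − ρ)) · 2^n f̂(0)^2 / ⟨f,f⟩, where ⟨f,f⟩ = 2^{−n} Σ_x f(x)^2. -/
open Finset

namespace Cube

attribute [local instance] Classical.propDecidable

/-- Hamming weight of a point of the Boolean cube. -/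
def wt {n : ℕ} (x : Fin n → Bool) : ℕ := (univ.filter fun i => x i = true).card

/-- Hamming distance. -/
def hdist {n : ℕ} (x y : Fin n → Bool) : ℕ := (univ.filter fun i => x i ≠ y i).card

/-- Coordinatewise addition mod 2 (XOR). -/
def xadd {n : ℕ} (x y : Fin n → Bool) : Fin n → Bool := fun i => x i != y i

/-- Walsh character `W_S(x) = (-1)^{⟨S,x⟩}`. -/
noncomputable def W {n : ℕ} (S x : Fin n → Bool) : ℝ :=
  (-1 : ℝ) ^ (univ.filter fun i => S i = true ∧ x i = true).card

/-- Fourier transform `f̂(S) = 2^{-n} ∑_x f(x) W_S(x)`. -/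
noncomputable def ft {n : ℕ} (f : (Fin n → Bool) → ℝ) : (Fin n → Bool) → ℝ :=
  fun S => (∑ x, f x * W S x) / 2 ^ n

/-- Convolution `(f ∗ g)(x) = 2^{-n} ∑_y f(y) g(x+y)`. -/
noncomputable def conv {n : ℕ} (f g : (Fin n → Bool) → ℝ) : (Fin n → Bool) → ℝ :=
  fun x => (∑ y, f y * g (xadd x y)) / 2 ^ n

/-- Normalized inner product `⟨f,g⟩ = 2^{-n} ∑_x f(x) g(x)`. -/
noncomputable def inp {n : ℕ} (f g : (Fin n → Bool) → ℝ) : ℝ := (∑ x, f x * g x) / 2 ^ n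

/-- The all-zeros vector. -/
def zeroV (n : ℕ) : Fin n → Bool := fun _ => false

/-- Krawtchouk polynomial value `K_s(j)` (parameter `n`), at integer points. -/
noncomputable def kraw (n s j : ℕ) : ℝ :=
  ∑ k ∈ Finset.range (s + 1),
    (-1 : ℝ) ^ k * (j.choose k : ℝ) * ((n - j).choose (s - k) : ℝ)

/-- Generalized binomial coefficient `C(x,k)` for real `x`. -/
noncomputable def rchoose (x : ℝ) (k : ℕ) : ℝ :=
  (∏ i ∈ Finset.range k, (x - i)) / (k.factorial : ℝ)

/-- Krawtchouk polynomial `K_m` (parameter `n`) as a function of a real variable. -/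
noncomputable def krawR (n m : ℕ) (x : ℝ) : ℝ :=
  ∑ k ∈ Finset.range (m + 1),
    (-1 : ℝ) ^ k * rchoose x k * rchoose ((n : ℝ) - x) (m - k)

/-- Symmetrization operator: average over the Hamming sphere of the same weight. -/
noncomputable def symm {n : ℕ} (f : (Fin n → Bool) → ℝ) : (Fin n → Bool) → ℝ :=
  fun x => (∑ y ∈ univ.filter (fun y => wt y = wt x), f y) /
    ((univ.filter (fun y : Fin n → Bool => wt y = wt x)).card : ℝ)

/-- Binary entropy function. -/
noncomputable def binH (x : ℝ) : ℝ :=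
  x * Real.logb 2 (1 / x) + (1 - x) * Real.logb 2 (1 / (1 - x))

/-!
The function `F = f ∗ (g ∗ f - ρ f)` is nonnegative, since `g ∗ f - ρ f ≥ (τ - ρ) f ≥ 0`, with
`F(0) ≥ (τ - ρ) ⟨f, f⟩`, and its transform `F̂ = f̂² (ĝ - ρ)` is nonpositive at weights `≥ d`.
Expanding `∑_S F(S) (∑_{c ∈ C} W_S(c))²` as `2^n ∑_{c, c' ∈ C} F̂(c + c')`, only the diagonal
survives the sign condition, giving the upper bound `2^n |C| F̂(0)`, while the term `S = 0` alone
is `F(0) |C|²`. This is Delsarte's linear programming bound `F(0) |C| ≤ 2^n F̂(0)`, and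
`F̂(0) = f̂(0)² (ĝ(0) - ρ)`.
-/

section Fourier

variable {n : ℕ}

lemma xadd_xadd_cancel (x y : Fin n → Bool) : xadd (xadd x y) y = x := by
  funext i; simp only [xadd]; cases x i <;> cases y i <;> rfl

lemma xadd_self (x : Fin n → Bool) : xadd x x = zeroV n := by
  funext i; simp [xadd, zeroV]

lemma zeroV_xadd (x : Fin n → Bool) : xadd (zeroV n) x = x := by
  funext i; simp [xadd, zeroV]

lemma wt_xadd (x y : Fin n → Bool) : wt (xadd x y) = hdist x y := by
  unfold wt hdist xadd
  congr 1
  ext i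
  simp only [mem_filter, mem_univ, true_and, bne_iff_ne, ne_eq]

lemma W_comm (S x : Fin n → Bool) : W S x = W x S := by
  simp only [W, and_comm]

lemma W_zeroV_left (x : Fin n → Bool) : W (zeroV n) x = 1 := by
  simp [W, zeroV]

lemma W_eq_prod (S x : Fin n → Bool) :
    W S x = ∏ i, if S i = true ∧ x i = true then (-1 : ℝ) else 1 := by
  rw [W, prod_ite, prod_const, prod_const_one, mul_one]

lemma W_xadd (S x y : Fin n → Bool) : W S (xadd x y) = W S x * W S y := by
  simp only [W_eq_prod, ← prod_mul_distrib, xadd]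
  refine prod_congr rfl fun i _ => ?_
  rcases Bool.dichotomy (S i) with hs | hs <;> rcases Bool.dichotomy (x i) with hx | hx <;>
    rcases Bool.dichotomy (y i) with hy | hy <;> simp only [hs, hx, hy] <;> norm_num

lemma ft_zeroV (u : (Fin n → Bool) → ℝ) : ft u (zeroV n) = (∑ x, u x) / 2 ^ n := by
  simp [ft, W_zeroV_left]

lemma ft_nonneg_zeroV {u : (Fin n → Bool) → ℝ} (hu : ∀ x, 0 ≤ u x) :
    0 ≤ ft u (zeroV n) := by
  rw [ft_zeroV]
  exact div_nonneg (sum_nonneg fun x _ => hu x) (by positivity)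

lemma ft_sub (u v : (Fin n → Bool) → ℝ) : ft (u - v) = ft u - ft v := by
  funext S
  simp only [ft, Pi.sub_apply, sub_mul, sum_sub_distrib, sub_div]

lemma ft_smul (c : ℝ) (u : (Fin n → Bool) → ℝ) : ft (c • u) = c • ft u := by
  funext S
  simp only [ft, Pi.smul_apply, smul_eq_mul, mul_assoc, ← mul_sum, mul_div_assoc]

lemma sum_comp_xadd (φ : (Fin n → Bool) → ℝ) (y : Fin n → Bool) :
    ∑ x, φ (xadd x y) = ∑ x, φ x :=
  Fintype.sum_bijective _ (Function.Involutive.bijective fun z => xadd_xadd_cancel z y) _ _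
    fun _ => rfl

lemma ft_conv (u v : (Fin n → Bool) → ℝ) (S : Fin n → Bool) :
    ft (conv u v) S = ft u S * ft v S := by
  have key : ∑ x, (∑ y, u y * v (xadd x y)) * W S x
      = (∑ y, u y * W S y) * ∑ z, v z * W S z :=
    calc ∑ x, (∑ y, u y * v (xadd x y)) * W S x
        = ∑ y, u y * ∑ x, v (xadd x y) * W S x := by
          simp only [sum_mul, mul_sum, mul_assoc]; exact sum_comm
      _ = ∑ y, u y * ∑ z, v z * W S (xadd z y) := by
          refine sum_congr rfl fun y _ => ?_
          rw [← sum_comp_xadd (fun z => v z * W S (xadd z y)) y]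
          simp only [xadd_xadd_cancel]
      _ = (∑ y, u y * W S y) * ∑ z, v z * W S z := by
          simp_rw [sum_mul_sum, W_xadd, mul_sum]
          exact sum_congr rfl fun y _ => sum_congr rfl fun z _ => by ring
  simp only [ft, conv, div_mul_eq_mul_div, ← sum_div, key]
  ring

lemma conv_zeroV (u v : (Fin n → Bool) → ℝ) : conv u v (zeroV n) = inp u v := by
  simp [conv, inp, zeroV_xadd]

lemma conv_nonneg {u v : (Fin n → Bool) → ℝ} (hu : ∀ x, 0 ≤ u x) (hv : ∀ x, 0 ≤ v x)
    (x : Fin n → Bool) : 0 ≤ conv u v x :=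
  div_nonneg (sum_nonneg fun y _ => mul_nonneg (hu y) (hv _)) (by positivity)

lemma inp_self_pos {u : (Fin n → Bool) → ℝ} (hu : u ≠ 0) : 0 < inp u u := by
  obtain ⟨x, hx⟩ := Function.ne_iff.mp hu
  have hsum : 0 < ∑ y, u y * u y :=
    sum_pos' (fun y _ => mul_self_nonneg (u y)) ⟨x, mem_univ x, mul_self_pos.mpr hx⟩
  exact div_pos hsum (by positivity)

end Fourier

section Delsarte

variable {n d : ℕ}

lemma sum_mul_sq_sum_W (F : (Fin n → Bool) → ℝ) (C : Finset (Fin n → Bool)) :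
    ∑ S, F S * (∑ c ∈ C, W S c) ^ 2 = 2 ^ n * ∑ c ∈ C, ∑ c' ∈ C, ft F (xadd c c') := by
  have hft : ∀ y, ∑ S, F S * W S y = 2 ^ n * ft F y := fun y => by
    simp only [ft, W_comm y]
    field_simp
  calc ∑ S, F S * (∑ c ∈ C, W S c) ^ 2
      = ∑ S, ∑ c ∈ C, ∑ c' ∈ C, F S * W S (xadd c c') := by
        simp_rw [sq, sum_mul_sum, mul_sum, W_xadd]
    _ = ∑ c ∈ C, ∑ c' ∈ C, ∑ S, F S * W S (xadd c c') := by
        rw [sum_comm]; exact sum_congr rfl fun c _ => sum_comm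
    _ = 2 ^ n * ∑ c ∈ C, ∑ c' ∈ C, ft F (xadd c c') := by
        simp only [hft, mul_sum]

lemma sum_sum_ft_xadd_le {F : (Fin n → Bool) → ℝ} (hFt : ∀ x, d ≤ wt x → ft F x ≤ 0)
    {C : Finset (Fin n → Bool)} (hC : ∀ x ∈ C, ∀ y ∈ C, x ≠ y → d ≤ hdist x y) :
    ∑ c ∈ C, ∑ c' ∈ C, ft F (xadd c c') ≤ C.card * ft F (zeroV n) := by
  rw [← nsmul_eq_mul, ← sum_const]
  refine sum_le_sum fun c hc => ?_
  rw [← add_sum_erase C _ hc, xadd_self, add_le_iff_nonpos_right]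
  refine sum_nonpos fun c' hc' => hFt _ ?_
  rw [wt_xadd]
  exact hC c hc c' (mem_of_mem_erase hc') (ne_of_mem_erase hc').symm

theorem mul_card_le_of_ft_nonpos {F : (Fin n → Bool) → ℝ} (hF : ∀ x, 0 ≤ F x)
    (hFt : ∀ x, d ≤ wt x → ft F x ≤ 0)
    {C : Finset (Fin n → Bool)} (hC : ∀ x ∈ C, ∀ y ∈ C, x ≠ y → d ≤ hdist x y) :
    F (zeroV n) * C.card ≤ 2 ^ n * ft F (zeroV n) := by
  rcases C.eq_empty_or_nonempty with rfl | hne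
  · simpa using mul_nonneg (pow_nonneg zero_le_two n) (ft_nonneg_zeroV hF)
  have hcard : (0 : ℝ) < C.card := by exact_mod_cast hne.card_pos
  have hK0 : ∑ c ∈ C, W (zeroV n) c = C.card := by simp [W_zeroV_left]
  have hsq : F (zeroV n) * C.card * C.card ≤ 2 ^ n * ft F (zeroV n) * C.card :=
    calc F (zeroV n) * C.card * C.card
        = F (zeroV n) * (∑ c ∈ C, W (zeroV n) c) ^ 2 := by rw [hK0]; ring
      _ ≤ ∑ S, F S * (∑ c ∈ C, W S c) ^ 2 :=
        single_le_sum (f := fun S => F S * (∑ c ∈ C, W S c) ^ 2)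
          (fun S _ => mul_nonneg (hF S) (sq_nonneg _)) (mem_univ _)
      _ = 2 ^ n * ∑ c ∈ C, ∑ c' ∈ C, ft F (xadd c c') := sum_mul_sq_sum_W F C
      _ ≤ 2 ^ n * (C.card * ft F (zeroV n)) := by gcongr; exact sum_sum_ft_xadd_le hFt hC
      _ = 2 ^ n * ft F (zeroV n) * C.card := by ring
  exact le_of_mul_le_mul_right hsq hcard

end Delsarte

theorem two_function_code_bound (n d : ℕ) (f g : (Fin n → Bool) → ℝ) (τ ρ : ℝ)
    (hf : ∀ x, 0 ≤ f x) (hf_ne : f ≠ 0) (hτρ : ρ < τ)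
    (h1 : ∀ x, τ * f x ≤ conv g f x)
    (h2 : ∀ S : Fin n → Bool, d ≤ wt S → ft g S ≤ ρ)
    (C : Finset (Fin n → Bool))
    (hC : ∀ x ∈ C, ∀ y ∈ C, x ≠ y → d ≤ hdist x y) :
    (C.card : ℝ) ≤ (ft g (zeroV n) - ρ) / (τ - ρ) *
      (2 ^ n * (ft f (zeroV n)) ^ 2 / inp f f) := by
  set G := conv g f - ρ • f
  have hG : ∀ x, (τ - ρ) * f x ≤ G x := fun x => by
    simp only [G, Pi.sub_apply, Pi.smul_apply, smul_eq_mul]; linarith [h1 x]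
  have hGnonneg : ∀ x, 0 ≤ G x := fun x =>
    (mul_nonneg (sub_nonneg.mpr hτρ.le) (hf x)).trans (hG x)
  have hFt : ∀ S, ft (conv f G) S = ft f S ^ 2 * (ft g S - ρ) := fun S => by
    simp only [G, ft_conv, ft_sub, ft_smul, Pi.sub_apply, Pi.smul_apply, smul_eq_mul]; ring
  have hF0 : (τ - ρ) * inp f f ≤ conv f G (zeroV n) := by
    rw [conv_zeroV, inp, inp, ← mul_div_assoc, mul_sum]
    refine div_le_div_of_nonneg_right (sum_le_sum fun x _ => ?_) (by positivity)
    rw [mul_left_comm]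
    exact mul_le_mul_of_nonneg_left (hG x) (hf x)
  have hFt_nonpos : ∀ S, d ≤ wt S → ft (conv f G) S ≤ 0 := fun S hS => by
    rw [hFt]
    exact mul_nonpos_of_nonneg_of_nonpos (sq_nonneg _) (sub_nonpos.mpr (h2 S hS))
  have hbound := mul_card_le_of_ft_nonpos (conv_nonneg hf hGnonneg) hFt_nonpos hC
  rw [hFt] at hbound
  rw [div_mul_div_comm, le_div_iff₀ (mul_pos (sub_pos.mpr hτρ) (inp_self_pos hf_ne))]
  calc (C.card : ℝ) * ((τ - ρ) * inp f f) ≤ conv f G (zeroV n) * C.card := by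
        rw [mul_comm]; gcongr
    _ ≤ 2 ^ n * (ft f (zeroV n) ^ 2 * (ft g (zeroV n) - ρ)) := hbound
    _ = (ft g (zeroV n) - ρ) * (2 ^ n * ft f (zeroV n) ^ 2) := by ring

end Cube
end

section
/- Let d = δn < βn < n/2 and let K_m have smallest root x₁ with x₁ − 1 > βn. Then for every integer i with βn ≤ i ≤ x₁ − 1, K_m(i) > 0 and K_m(i)/K_m(d) ≤ (x₁ − i)/(x₁ − d) ≤ (1 − 2β)/(2β − 2δ). -/
/-!
`K_m` is a real polynomial of degree at most `m` which, for the binomial weights `C(n, j)` on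
`{0, …, n}`, is orthogonal to every polynomial of degree `< m`: extract the coefficient of `z^m`
from `∑ⱼ C(n, j) C(j, t) (1 - z)^j (1 + z)^(n - j) = C(n, t) 2^(n - t) (1 - z)^t`.
Hence all its roots are real: otherwise the product `q` of its linear factors has degree `< m`,
while `K_m q = q² w` with `w` free of real roots has constant sign and `K_m(0) q(0) ≠ 0`, so
`∑ C(n, j) K_m(j) q(j) ≠ 0`.
Writing `K_m(x) = c ∏ (x - r)` over the roots `r ≥ x₁`, every factor `(r - i) / (r - d)` with
`d ≤ i ≤ x₁` lies in `[0, 1]`, which gives `K_m(i) / K_m(d) ≤ (x₁ - i) / (x₁ - d)`.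
Finally `K_m(n - x) = (-1)^m K_m(x)` forces `x₁ ≤ n / 2`, and the last bound is arithmetic.
-/

open Finset

namespace Cube

attribute [local instance] Classical.propDecidable

open Polynomial

theorem _root_.Continuous.mul_pos_of_forall_ne_zero {X : Type*} [TopologicalSpace X]
    [PreconnectedSpace X] {f : X → ℝ} (hf : Continuous f) (h : ∀ x, f x ≠ 0) (x y : X) :
    0 < f x * f y := by
  by_contra! hxy
  rcases mul_nonpos_iff.1 hxy with ⟨hx, hy⟩ | ⟨hx, hy⟩
  · obtain ⟨z, hz⟩ := intermediate_value_univ y x hf ⟨hy, hx⟩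
    exact h z hz
  · obtain ⟨z, hz⟩ := intermediate_value_univ x y hf ⟨hx, hy⟩
    exact h z hz

theorem _root_.Polynomial.eval_mul_eval_prod_roots_mul_nonneg (p : ℝ[X]) (x y : ℝ) :
    0 ≤ p.eval x * (p.roots.map fun a => X - C a).prod.eval x *
      (p.eval y * (p.roots.map fun a => X - C a).prod.eval y) := by
  set q := (p.roots.map fun a => X - C a).prod
  rcases eq_or_ne p 0 with rfl | hp
  · simp
  obtain ⟨w, hw⟩ := prod_multiset_X_sub_C_dvd p
  have hw_ne : ∀ z, w.eval z ≠ 0 := by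
    intro z hz
    have hroots : p.roots = p.roots + w.roots := by
      conv_lhs => rw [hw]
      rw [roots_mul (hw ▸ hp), roots_multiset_prod_X_sub_C]
    have hz : z ∈ w.roots := (mem_roots (right_ne_zero_of_mul (hw ▸ hp))).2 hz
    have hcard := congrArg Multiset.card hroots
    rw [Multiset.card_add] at hcard
    have := Multiset.card_pos_iff_exists_mem.2 ⟨z, hz⟩
    omega
  have hw_pos := w.continuous.mul_pos_of_forall_ne_zero hw_ne x y
  calc (0 : ℝ) ≤ (q.eval x * q.eval y) ^ 2 * (w.eval x * w.eval y) := by positivity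
    _ = _ := by rw [hw, eval_mul, eval_mul]; ring

theorem _root_.Polynomial.card_roots_eq_natDegree_of_sum_mul_eval_eq_zero {ι : Type*}
    {p : ℝ[X]} {s : Finset ι} {t μ : ι → ℝ} (hμ : ∀ i ∈ s, 0 ≤ μ i) {i₀ : ι} (hi₀ : i₀ ∈ s)
    (hμ₀ : 0 < μ i₀) (hp₀ : p.eval (t i₀) ≠ 0)
    (horth : ∀ q : ℝ[X], q.natDegree < p.natDegree →
      ∑ i ∈ s, μ i * p.eval (t i) * q.eval (t i) = 0) :
    Multiset.card p.roots = p.natDegree := by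
  set q := (p.roots.map fun a => X - C a).prod
  refine le_antisymm (card_roots' p) (not_lt.1 fun hlt => ?_)
  have hq : q.natDegree < p.natDegree := by rwa [natDegree_multiset_prod_X_sub_C_eq_card]
  have hq₀ : q.eval (t i₀) ≠ 0 := by
    intro h
    have hmem : t i₀ ∈ q.roots :=
      mem_roots'.2 ⟨(monic_multiset_prod_of_monic _ _ fun a _ => monic_X_sub_C a).ne_zero, h⟩
    rw [roots_multiset_prod_X_sub_C] at hmem
    exact hp₀ (isRoot_of_mem_roots hmem)
  set c := p.eval (t i₀) * q.eval (t i₀)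
  have hsum : ∑ i ∈ s, μ i * (p.eval (t i) * q.eval (t i) * c) = 0 := by
    simp_rw [← mul_assoc]
    rw [← Finset.sum_mul, horth q hq, zero_mul]
  have hterm := (Finset.sum_eq_zero_iff_of_nonneg fun i hi =>
    mul_nonneg (hμ i hi) (p.eval_mul_eval_prod_roots_mul_nonneg _ _)).1 hsum i₀ hi₀
  exact mul_ne_zero hμ₀.ne' (mul_self_ne_zero.2 (mul_ne_zero hp₀ hq₀)) hterm

theorem _root_.Polynomial.eval_div_eval_le_of_card_roots_eq_natDegree {p : ℝ[X]}
    (hp : Multiset.card p.roots = p.natDegree) {a b c : ℝ} (ha : a ∈ p.roots)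
    (hmin : ∀ r ∈ p.roots, a ≤ r) (hbc : b ≤ c) (hca : c ≤ a) (hb : b < a) :
    p.eval c / p.eval b ≤ (a - c) / (a - b) := by
  obtain ⟨rest, hrest⟩ := Multiset.exists_cons_of_mem ha
  have heval : ∀ y, p.eval y = p.leadingCoeff * (p.roots.map fun r => y - r).prod := by
    intro y
    conv_lhs => rw [← C_leadingCoeff_mul_prod_multiset_X_sub_C hp]
    simp [eval_multiset_prod]
  have hlead : p.leadingCoeff ≠ 0 := leadingCoeff_ne_zero.2 (ne_zero_of_mem_roots ha)
  have hfactor : ∀ r ∈ rest, 0 ≤ (c - r) / (b - r) ∧ (c - r) / (b - r) ≤ 1 := by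
    intro r hr
    have har : a ≤ r := hmin r (by rw [hrest]; exact Multiset.mem_cons_of_mem hr)
    rw [← neg_div_neg_eq, neg_sub, neg_sub]
    exact ⟨div_nonneg (by linarith) (by linarith), div_le_one_of_le₀ (by linarith) (by linarith)⟩
  rw [heval, heval, mul_div_mul_left _ _ hlead, ← Multiset.prod_map_div, hrest, Multiset.map_cons,
    Multiset.prod_cons]
  calc (c - a) / (b - a) * (rest.map fun r => (c - r) / (b - r)).prod
      ≤ (c - a) / (b - a) * (rest.map fun _ => (1 : ℝ)).prod := by
        refine mul_le_mul_of_nonneg_left (Multiset.prod_map_le_prod_map₀ _ _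
          (fun r hr => (hfactor r hr).1) (fun r hr => (hfactor r hr).2)) ?_
        rw [← neg_div_neg_eq, neg_sub, neg_sub]
        exact div_nonneg (by linarith) (by linarith)
    _ = (a - c) / (a - b) := by
        rw [Multiset.map_const', Multiset.prod_replicate, one_pow, mul_one, ← neg_div_neg_eq,
          neg_sub, neg_sub]

theorem _root_.Polynomial.apply_eq_zero_of_apply_descPochhammer_eq_zero {R M : Type*} [CommRing R]
    [IsDomain R] [AddCommGroup M] [Module R M] (L : R[X] →ₗ[R] M) {m : ℕ}
    (h : ∀ t < m, L (descPochhammer R t) = 0) {q : R[X]} (hq : q.natDegree < m) : L q = 0 := by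
  suffices ∀ s < m, ∀ q : R[X], q.natDegree ≤ s → L q = 0 from this _ hq q le_rfl
  intro s
  induction s with
  | zero =>
    intro h0 q hq
    rw [eq_C_of_natDegree_le_zero hq, ← mul_one (C _), ← smul_eq_C_mul, map_smul,
      ← descPochhammer_zero, h 0 h0, smul_zero]
  | succ s ih =>
    intro hs q hq
    set q' := q - C (q.coeff (s + 1)) * descPochhammer R (s + 1)
    have hq' : q'.natDegree ≤ s := by
      rw [natDegree_le_iff_coeff_eq_zero]
      intro N hN
      rw [coeff_sub, coeff_C_mul]
      rcases (Nat.succ_le_of_lt hN).eq_or_lt with rfl | hlt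
      · have hlead := (monic_descPochhammer R (s + 1)).coeff_natDegree
        rw [descPochhammer_natDegree] at hlead
        rw [hlead, mul_one, sub_self]
      · rw [coeff_eq_zero_of_natDegree_lt (n := N) (hq.trans_lt hlt),
          coeff_eq_zero_of_natDegree_lt (n := N) (by rwa [descPochhammer_natDegree]), mul_zero,
          sub_zero]
    have hsplit : q = q' + q.coeff (s + 1) • descPochhammer R (s + 1) := by
      rw [smul_eq_C_mul]; ring
    rw [hsplit, map_add, map_smul, ih (by omega) q' hq', h (s + 1) hs, smul_zero, add_zero]

theorem _root_.Polynomial.coeff_one_sub_X_pow (R : Type*) [CommRing R] (j k : ℕ) :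
    ((1 - X : R[X]) ^ j).coeff k = (-1) ^ k * j.choose k := by
  induction j generalizing k with
  | zero => rcases k with _ | k <;> simp [coeff_one]
  | succ j ih =>
    rcases k with _ | k
    · simp [coeff_zero_eq_eval_zero]
    · rw [pow_succ, mul_sub, mul_one, coeff_sub, coeff_mul_X, ih, ih, Nat.choose_succ_succ']
      push_cast
      ring

theorem _root_.sum_choose_mul_choose_mul_pow {R : Type*} [CommSemiring R] (u v : R) (n t : ℕ) :
    ∑ j ∈ range (n + 1), (n.choose j * j.choose t : R) * (u ^ j * v ^ (n - j)) =
      n.choose t * u ^ t * (u + v) ^ (n - t) := by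
  rcases lt_or_ge n t with hnt | htn
  · rw [Nat.choose_eq_zero_of_lt hnt, Nat.cast_zero, zero_mul, zero_mul]
    refine Finset.sum_eq_zero fun j hj => ?_
    rw [Nat.choose_eq_zero_of_lt (by grind : j < t)]
    simp
  obtain ⟨s, rfl⟩ := Nat.exists_eq_add_of_le htn
  rw [show t + s + 1 = t + (s + 1) by ring, Finset.sum_range_add, add_pow, Finset.mul_sum,
    Finset.sum_eq_zero, zero_add, Nat.add_sub_cancel_left]
  · refine Finset.sum_congr rfl fun i hi => ?_
    have hi : i ≤ s := Nat.lt_succ_iff.1 (Finset.mem_range.1 hi)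
    have hchoose := Nat.choose_mul (n := t + s) (k := t + i) (s := t) (Nat.le_add_right t i)
    rw [Nat.add_sub_cancel_left, Nat.add_sub_cancel_left] at hchoose
    rw [← Nat.cast_mul, hchoose, show t + s - (t + i) = s - i by omega]
    push_cast
    ring
  · intro j hj
    rw [Nat.choose_eq_zero_of_lt (Finset.mem_range.1 hj)]
    simp

theorem kraw_eq_coeff (n m j : ℕ) :
    kraw n m j = ((1 - X : ℝ[X]) ^ j * (1 + X) ^ (n - j)).coeff m := by
  rw [coeff_mul, Finset.Nat.sum_antidiagonal_eq_sum_range_succ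
    (fun a b => ((1 - X : ℝ[X]) ^ j).coeff a * ((1 + X) ^ (n - j)).coeff b), kraw]
  simp only [coeff_one_sub_X_pow, coeff_one_add_X_pow, mul_assoc]

theorem sum_choose_mul_choose_mul_kraw (n : ℕ) {m t : ℕ} (ht : t < m) :
    ∑ j ∈ range (n + 1), (n.choose j * j.choose t : ℝ) * kraw n m j = 0 := by
  have h := congrArg (coeff · m) (sum_choose_mul_choose_mul_pow (1 - X : ℝ[X]) (1 + X) n t)
  have h2 : (1 - X + (1 + X) : ℝ[X]) = C 2 := by rw [C_ofNat]; ring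
  simp only [finsetSum_coeff, ← Nat.cast_mul, coeff_natCast_mul, h2, ← C_pow, coeff_mul_C,
    coeff_one_sub_X_pow, Nat.choose_eq_zero_of_lt ht] at h
  simpa [kraw_eq_coeff] using h

theorem sum_choose_mul_kraw_mul_eval_descPochhammer (n : ℕ) {m t : ℕ} (ht : t < m) :
    ∑ j ∈ range (n + 1), (n.choose j : ℝ) * kraw n m j * (descPochhammer ℝ t).eval (j : ℝ) = 0 :=
  calc _ = (t.factorial : ℝ) * ∑ j ∈ range (n + 1), (n.choose j * j.choose t : ℝ) * kraw n m j := by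
        rw [Finset.mul_sum]
        refine Finset.sum_congr rfl fun j _ => ?_
        rw [descPochhammer_eval_eq_descFactorial, Nat.descFactorial_eq_factorial_mul_choose]
        push_cast
        ring
    _ = 0 := by rw [sum_choose_mul_choose_mul_kraw n ht, mul_zero]

theorem sum_choose_mul_kraw_mul_eval_eq_zero (n : ℕ) {m : ℕ} {q : ℝ[X]} (hq : q.natDegree < m) :
    ∑ j ∈ range (n + 1), (n.choose j : ℝ) * kraw n m j * q.eval (j : ℝ) = 0 := by
  let L : ℝ[X] →ₗ[ℝ] ℝ := ∑ j ∈ range (n + 1), ((n.choose j : ℝ) * kraw n m j) • leval (j : ℝ)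
  have hL : ∀ p, L p = ∑ j ∈ range (n + 1), (n.choose j : ℝ) * kraw n m j * p.eval (j : ℝ) := by
    intro p
    simp [L, LinearMap.sum_apply]
  rw [← hL]
  exact apply_eq_zero_of_apply_descPochhammer_eq_zero L
    (fun t ht => by rw [hL]; exact sum_choose_mul_kraw_mul_eval_descPochhammer n ht) hq

theorem rchoose_natCast (j k : ℕ) : rchoose j k = j.choose k := by
  rw [rchoose, ← descPochhammer_eval_eq_prod_range, Nat.cast_choose_eq_descPochhammer_div]

theorem krawR_natCast {n j : ℕ} (m : ℕ) (hj : j ≤ n) : krawR n m j = kraw n m j := by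
  simp only [krawR, kraw, rchoose_natCast, ← Nat.cast_sub hj]

theorem krawR_zero (n m : ℕ) : krawR n m 0 = n.choose m := by
  rw [← Nat.cast_zero, krawR_natCast m (Nat.zero_le n), kraw, Finset.sum_eq_single 0]
  · simp
  · intro k _ hk
    simp [Nat.choose_eq_zero_of_lt (Nat.pos_of_ne_zero hk)]
  · simp

theorem krawR_natCast_sub (n m : ℕ) (x : ℝ) : krawR n m (n - x) = (-1) ^ m * krawR n m x := by
  rw [krawR, krawR, Finset.mul_sum, ← Finset.sum_range_reflect]
  refine Finset.sum_congr rfl fun k hk => ?_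
  have hk : k ≤ m := Nat.lt_succ_iff.1 (Finset.mem_range.1 hk)
  rw [show m + 1 - 1 - k = m - k by omega, Nat.sub_sub_self hk, sub_sub_cancel]
  have hsign : (-1 : ℝ) ^ m = (-1) ^ (m - k) * (-1) ^ k := by rw [← pow_add, Nat.sub_add_cancel hk]
  have hsq : ((-1 : ℝ) ^ k) ^ 2 = 1 := by rw [← pow_mul, pow_mul', neg_one_sq, one_pow]
  rw [hsign]
  linear_combination -(-1 : ℝ) ^ (m - k) * rchoose x k * rchoose (n - x) (m - k) * hsq

noncomputable def krawPoly (n m : ℕ) : ℝ[X] :=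
  ∑ k ∈ range (m + 1), C ((-1 : ℝ) ^ k / (k.factorial * (m - k).factorial)) *
    (descPochhammer ℝ k * (descPochhammer ℝ (m - k)).comp (C (n : ℝ) - X))

theorem eval_krawPoly (n m : ℕ) (x : ℝ) : (krawPoly n m).eval x = krawR n m x := by
  simp only [krawPoly, krawR, rchoose, eval_finsetSum, eval_mul, eval_C, eval_comp, eval_sub,
    eval_X, descPochhammer_eval_eq_prod_range]
  refine Finset.sum_congr rfl fun k _ => ?_
  field_simp

theorem natDegree_krawPoly_le (n m : ℕ) : (krawPoly n m).natDegree ≤ m := by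
  refine natDegree_sum_le_of_forall_le _ _ fun k hk => ?_
  have hk : k ≤ m := Nat.lt_succ_iff.1 (Finset.mem_range.1 hk)
  refine (natDegree_C_mul_le _ _).trans (natDegree_mul_le.trans ?_)
  have h1 := natDegree_comp_le (p := descPochhammer ℝ (m - k)) (q := C (n : ℝ) - X)
  rw [descPochhammer_natDegree] at h1
  have h2 : (C (n : ℝ) - X).natDegree ≤ 1 := (natDegree_sub_le _ _).trans (by simp)
  calc _ ≤ k + (m - k) * 1 :=
        add_le_add (descPochhammer_natDegree ℝ k).le (h1.trans (Nat.mul_le_mul_left _ h2))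
    _ = m := by omega

theorem krawPoly_ne_zero {n m : ℕ} (hm : m ≤ n) : krawPoly n m ≠ 0 := by
  intro h
  have h₀ := eval_krawPoly n m 0
  rw [h, eval_zero, krawR_zero] at h₀
  exact (Nat.choose_pos hm).ne' (by exact_mod_cast h₀.symm)

theorem card_roots_krawPoly {n m : ℕ} (hm : m ≤ n) :
    Multiset.card (krawPoly n m).roots = (krawPoly n m).natDegree := by
  refine card_roots_eq_natDegree_of_sum_mul_eval_eq_zero (s := range (n + 1)) (t := fun j => j)
    (μ := fun j => n.choose j) (fun _ _ => Nat.cast_nonneg _) (Finset.mem_range.2 n.succ_pos)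
    (by simp) ?_ ?_
  · rw [Nat.cast_zero, eval_krawPoly, krawR_zero]
    exact_mod_cast (Nat.choose_pos hm).ne'
  · intro q hq
    rw [← sum_choose_mul_kraw_mul_eval_eq_zero n (hq.trans_le (natDegree_krawPoly_le n m))]
    refine Finset.sum_congr rfl fun j hj => ?_
    rw [eval_krawPoly, krawR_natCast m (Nat.lt_succ_iff.1 (Finset.mem_range.1 hj))]

theorem krawR_pos_of_nonneg_of_lt {n m : ℕ} {x₁ y : ℝ}
    (hmin : ∀ z, krawR n m z = 0 → x₁ ≤ z) (hy₀ : 0 ≤ y) (hy : y < x₁) : 0 < krawR n m y := by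
  have hcont : Continuous (krawR n m) := by
    simpa only [eval_krawPoly] using (krawPoly n m).continuous
  by_contra! hle
  have hK₀ : 0 ≤ krawR n m 0 := by rw [krawR_zero]; positivity
  obtain ⟨z, hz, hz₀⟩ := intermediate_value_Icc' hy₀ hcont.continuousOn ⟨hle, hK₀⟩
  exact (hmin z hz₀).not_gt (hz.2.trans_lt hy)

theorem kraw_ratio_bound_between_beta_and_root_general (n m d : ℕ) (β δ x₁ : ℝ)
    (hm : m ≤ n)
    (hδ : (d : ℝ) = δ * n) (hβδ : δ < β) (hβ : β < 1 / 2)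
    (hroot : krawR n m x₁ = 0)
    (hmin : ∀ y : ℝ, krawR n m y = 0 → x₁ ≤ y) :
    ∀ i : ℕ, β * n ≤ (i : ℝ) → (i : ℝ) ≤ x₁ - 1 →
      0 < krawR n m i ∧
      krawR n m i / krawR n m d ≤ (x₁ - i) / (x₁ - d) ∧
      (x₁ - i) / (x₁ - d) ≤ (1 - 2 * β) / (2 * β - 2 * δ) := by
  intro i hiβ hix
  have hn : (0 : ℝ) ≤ n := n.cast_nonneg
  have hdi : (d : ℝ) ≤ i := by rw [hδ]; nlinarith
  have hx₁_half : x₁ ≤ n - x₁ := hmin _ (by rw [krawR_natCast_sub, hroot, mul_zero])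
  have hx₁_root : x₁ ∈ (krawPoly n m).roots :=
    mem_roots'.2 ⟨krawPoly_ne_zero hm, by rw [IsRoot, eval_krawPoly, hroot]⟩
  have hroots : ∀ r ∈ (krawPoly n m).roots, x₁ ≤ r := fun r hr =>
    hmin r (by rw [← eval_krawPoly]; exact (mem_roots'.1 hr).2)
  refine ⟨krawR_pos_of_nonneg_of_lt hmin i.cast_nonneg (by linarith), ?_, ?_⟩
  · simpa only [eval_krawPoly] using eval_div_eval_le_of_card_roots_eq_natDegree
      (card_roots_krawPoly hm) hx₁_root hroots hdi (by linarith) (by linarith)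
  · rw [div_le_div_iff₀ (by linarith) (by linarith)]
    have hnum : x₁ - i ≤ n * (1 - 2 * β) / 2 := by linarith
    have hden : n * (β - δ) ≤ x₁ - d := by rw [hδ]; linarith
    nlinarith [mul_le_mul_of_nonneg_right hnum (by linarith : (0 : ℝ) ≤ 2 * β - 2 * δ),
      mul_le_mul_of_nonneg_left hden (by linarith : (0 : ℝ) ≤ 1 - 2 * β)]

theorem kraw_ratio_bound_between_beta_and_root (n m d : ℕ) (β δ x₁ : ℝ)
    (hn : 0 < n) (hm : m ≤ n)
    (hδ : (d : ℝ) = δ * n) (h0 : 0 < δ) (hβδ : δ < β) (hβ : β < 1 / 2)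
    (hroot : krawR n m x₁ = 0)
    (hmin : ∀ y : ℝ, krawR n m y = 0 → x₁ ≤ y)
    (hx₁ : β * n < x₁ - 1) :
    ∀ i : ℕ, β * n ≤ (i : ℝ) → (i : ℝ) ≤ x₁ - 1 →
      0 < krawR n m i ∧
      krawR n m i / krawR n m d ≤ (x₁ - i) / (x₁ - d) ∧
      (x₁ - i) / (x₁ - d) ≤ (1 - 2 * β) / (2 * β - 2 * δ) :=
  kraw_ratio_bound_between_beta_and_root_general n m d β δ x₁ hm hδ hβδ hβ hroot hmin

end Cube
end
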